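/- arXiv:1912.00050 — 4 statements merged into one kernel-verified Lean document; each statement's English description precedes it below -/
import Mathlib

section
/- In the discrete oscillator group L = H₁ʳ(ℤ) ⋊_S ℤδ with trivial induced action (S̄ = I₂), where S(α) = α·γᵏ, S(β) = β·γˡ, S(γ) = γ, the center of L equals the subgroup generated by γ and α^a β^b δ^d, where r₀ = gcd(k, l, r), a = -l/r₀, b = k/r₀, d = r/r₀. Moreover the commutator subgroup [L,L] is generated by γ^{r₀}. -/
/-- The discrete Heisenberg group `H₁ʳ(ℤ)`: elements `α^x β^y γ^z` in normal form,
with `[α,β] = γ^r` and `γ` central. -/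
@[ext]
structure Heis (r : ℤ) where
  x : ℤ
  y : ℤ
  z : ℤ

namespace Heis

variable {r : ℤ}

instance : Mul (Heis r) :=
  ⟨fun a b => ⟨a.x + b.x, a.y + b.y, a.z + b.z + r * a.x * b.y⟩⟩

instance : One (Heis r) := ⟨⟨0, 0, 0⟩⟩

instance : Inv (Heis r) := ⟨fun a => ⟨-a.x, -a.y, -a.z + r * a.x * a.y⟩⟩

@[simp] theorem mul_x (a b : Heis r) : (a * b).x = a.x + b.x := rfl
@[simp] theorem mul_y (a b : Heis r) : (a * b).y = a.y + b.y := rfl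
@[simp] theorem mul_z (a b : Heis r) : (a * b).z = a.z + b.z + r * a.x * b.y := rfl
@[simp] theorem one_x : (1 : Heis r).x = 0 := rfl
@[simp] theorem one_y : (1 : Heis r).y = 0 := rfl
@[simp] theorem one_z : (1 : Heis r).z = 0 := rfl
@[simp] theorem inv_x (a : Heis r) : (a⁻¹).x = -a.x := rfl
@[simp] theorem inv_y (a : Heis r) : (a⁻¹).y = -a.y := rfl
@[simp] theorem inv_z (a : Heis r) : (a⁻¹).z = -a.z + r * a.x * a.y := rfl

instance : Group (Heis r) where
  mul_assoc a b c := by ext <;> simp <;> ring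
  one_mul a := by ext <;> simp
  mul_one a := by ext <;> simp
  inv_mul_cancel a := by ext <;> simp

/-- The generator `α` of the discrete Heisenberg group. -/
def α : Heis r := ⟨1, 0, 0⟩
/-- The generator `β` of the discrete Heisenberg group. -/
def β : Heis r := ⟨0, 1, 0⟩
/-- The central generator `γ` of the discrete Heisenberg group. -/
def γ : Heis r := ⟨0, 0, 1⟩

end Heis

open SemidirectProduct

/-!
The hypotheses force `φ m` to be the shear `(x, y, z) ↦ (x, y, z + m (k x + l y))`, so the
group can be computed in coordinates `(x, y, z, n)`, and every commutator `⁅g, h⁆` is the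
central element `γ ^ (r (x₁ y₂ - x₂ y₁) + n₁ (k x₂ + l y₂) - n₂ (k x₁ + l y₁))`. Hence `g` is
central iff `r y = n k` and `r x = -n l`; as `gcd (a, b, d) = 1`, the solutions are exactly the
multiples of `(a, b, d)`. The exponents above are multiples of `r₀`, and `k`, `l`, `r` occur as
the exponents of `⁅δ, α⁆`, `⁅δ, β⁆`, `⁅α, β⁆`, so by Bézout they generate `r₀ ℤ`.
-/

theorem Int.exists_mul_add_mul_add_mul_eq_gcd (k l r : ℤ) :
    ∃ u v w : ℤ, k * u + l * v + r * w = Int.gcd k (Int.gcd l r) :=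
  ⟨gcdA k (gcd l r), gcdA l r * gcdB k (gcd l r), gcdB l r * gcdB k (gcd l r), by
    linear_combination -(gcd_eq_gcd_ab k (gcd l r)) - gcdB k (gcd l r) * gcd_eq_gcd_ab l r⟩

namespace Heis

variable {r : ℤ}

@[simp] theorem α_zpow (n : ℤ) : (α : Heis r) ^ n = ⟨n, 0, 0⟩ := by
  induction n using Int.induction_on with
  | zero => rfl
  | succ n ih => rw [zpow_add_one, ih]; ext <;> simp [α]
  | pred n ih => rw [zpow_sub_one, ih]; ext <;> simp [α, sub_eq_add_neg]

@[simp] theorem β_zpow (n : ℤ) : (β : Heis r) ^ n = ⟨0, n, 0⟩ := by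
  induction n using Int.induction_on with
  | zero => rfl
  | succ n ih => rw [zpow_add_one, ih]; ext <;> simp [β]
  | pred n ih => rw [zpow_sub_one, ih]; ext <;> simp [β, sub_eq_add_neg]

@[simp] theorem γ_zpow (n : ℤ) : (γ : Heis r) ^ n = ⟨0, 0, n⟩ := by
  induction n using Int.induction_on with
  | zero => rfl
  | succ n ih => rw [zpow_add_one, ih]; ext <;> simp [γ]
  | pred n ih => rw [zpow_sub_one, ih]; ext <;> simp [γ, sub_eq_add_neg]

theorem mk_eq_α_zpow_mul_β_zpow_mul_γ_zpow (x y z : ℤ) :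
    (⟨x, y, z⟩ : Heis r) = α ^ x * β ^ y * γ ^ (z - r * x * y) := by
  ext <;> simp

theorem hom_ext {G : Type*} [Group G] {f g : Heis r →* G} (hα : f α = g α) (hβ : f β = g β)
    (hγ : f γ = g γ) : f = g := by
  ext ⟨x, y, z⟩
  simp only [mk_eq_α_zpow_mul_β_zpow_mul_γ_zpow, map_mul, map_zpow, hα, hβ, hγ]

end Heis

/-- The automorphism `Sⁿ` of `H₁ʳ(ℤ)`, where `S(α) = αγᵏ`, `S(β) = βγˡ`, `S(γ) = γ`. -/
def shear (r k l n : ℤ) : Heis r ≃* Heis r where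
  toFun g := ⟨g.x, g.y, g.z + n * (k * g.x + l * g.y)⟩
  invFun g := ⟨g.x, g.y, g.z - n * (k * g.x + l * g.y)⟩
  left_inv g := by ext <;> simp
  right_inv g := by ext <;> simp
  map_mul' g h := by ext <;> simp; ring

def shearHom (r k l : ℤ) : Multiplicative ℤ →* MulAut (Heis r) where
  toFun m := shear r k l m.toAdd
  map_one' := by ext g <;> simp [shear]
  map_mul' m₁ m₂ := by ext g <;> simp [shear]; ring

section shearHom

variable {r k l : ℤ}

@[simp] theorem shearHom_apply_x (m : Multiplicative ℤ) (g : Heis r) :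
    (shearHom r k l m g).x = g.x := rfl

@[simp] theorem shearHom_apply_y (m : Multiplicative ℤ) (g : Heis r) :
    (shearHom r k l m g).y = g.y := rfl

@[simp] theorem shearHom_apply_z (m : Multiplicative ℤ) (g : Heis r) :
    (shearHom r k l m g).z = g.z + m.toAdd * (k * g.x + l * g.y) := rfl

@[simp] theorem shearHom_symm_apply_x (m : Multiplicative ℤ) (g : Heis r) :
    ((shearHom r k l m).symm g).x = g.x := rfl

@[simp] theorem shearHom_symm_apply_y (m : Multiplicative ℤ) (g : Heis r) :
    ((shearHom r k l m).symm g).y = g.y := rfl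

@[simp] theorem shearHom_symm_apply_z (m : Multiplicative ℤ) (g : Heis r) :
    ((shearHom r k l m).symm g).z = g.z - m.toAdd * (k * g.x + l * g.y) := rfl

theorem eq_shearHom {φ : Multiplicative ℤ →* MulAut (Heis r)}
    (hα : φ (Multiplicative.ofAdd 1) Heis.α = Heis.α * Heis.γ ^ k)
    (hβ : φ (Multiplicative.ofAdd 1) Heis.β = Heis.β * Heis.γ ^ l)
    (hγ : φ (Multiplicative.ofAdd 1) Heis.γ = Heis.γ) :
    φ = shearHom r k l := by
  refine MonoidHom.ext_mint (MulEquiv.toMonoidHom_injective (Heis.hom_ext ?_ ?_ ?_))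
  · simp only [MulEquiv.coe_toMonoidHom, hα]; ext <;> simp [Heis.α]
  · simp only [MulEquiv.coe_toMonoidHom, hβ]; ext <;> simp [Heis.β]
  · simp only [MulEquiv.coe_toMonoidHom, hγ]; ext <;> simp [Heis.γ]

end shearHom

abbrev OscillatorGroup (r k l : ℤ) := Heis r ⋊[shearHom r k l] Multiplicative ℤ

namespace OscillatorGroup

open Heis
open scoped commutatorElement

variable {r k l : ℤ}

theorem commutatorElement_eq (g h : OscillatorGroup r k l) :
    ⁅g, h⁆ = inl (γ ^ (r * (g.left.x * h.left.y - h.left.x * g.left.y)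
      + g.right.toAdd * (k * h.left.x + l * h.left.y)
      - h.right.toAdd * (k * g.left.x + l * g.left.y))) := by
  ext <;> simp [commutatorElement_def]
  ring

theorem mem_center_iff (hr : r ≠ 0) {g : OscillatorGroup r k l} :
    g ∈ Subgroup.center (OscillatorGroup r k l) ↔
      r * g.left.y = g.right.toAdd * k ∧ r * g.left.x = -(g.right.toAdd * l) := by
  simp only [Subgroup.mem_center_iff, ← commutatorElement_eq_one_iff_mul_comm,
    commutatorElement_eq, map_eq_one_iff _ (inl_injective), γ_zpow]
  constructor
  · intro h
    have hα := congrArg Heis.z (h (inl α))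
    have hβ := congrArg Heis.z (h (inl β))
    simp only [α, β, left_inl, right_inl, toAdd_one, one_z, one_mul, mul_one, mul_zero, zero_mul,
      add_zero, zero_add, sub_zero, zero_sub, mul_neg] at hα hβ
    constructor <;> linarith
  · rintro ⟨hy, hx⟩ h
    have hxy : k * g.left.x + l * g.left.y = 0 :=
      mul_left_cancel₀ hr (by linear_combination k * hx + l * hy)
    ext <;> simp
    linear_combination h.left.x * hy - h.left.y * hx + h.right.toAdd * hxy

theorem zpow_left_x (g : OscillatorGroup r k l) (n : ℤ) : (g ^ n).left.x = n * g.left.x := by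
  induction n using Int.induction_on with
  | zero => simp
  | succ n ih =>
    simp only [zpow_add_one, mul_left, Heis.mul_x, shearHom_apply_x, ih]; ring
  | pred n ih =>
    simp only [zpow_sub_one, mul_left, inv_left, Heis.mul_x, shearHom_apply_x, Heis.inv_x, ih]
    ring

theorem zpow_left_y (g : OscillatorGroup r k l) (n : ℤ) : (g ^ n).left.y = n * g.left.y := by
  induction n using Int.induction_on with
  | zero => simp
  | succ n ih =>
    simp only [zpow_add_one, mul_left, Heis.mul_y, shearHom_apply_y, ih]; ring
  | pred n ih =>
    simp only [zpow_sub_one, mul_left, inv_left, Heis.mul_y, shearHom_apply_y, Heis.inv_y, ih]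
    ring

theorem zpow_right_toAdd (g : OscillatorGroup r k l) (n : ℤ) :
    (g ^ n).right.toAdd = n * g.right.toAdd := by
  rw [← rightHom_eq_right, map_zpow, toAdd_zpow, smul_eq_mul]

section

variable {r₀ u v w a b d : ℤ} (hbez : k * u + l * v + r * w = r₀)
  (ha : a * r₀ = -l) (hb : b * r₀ = k) (hd : d * r₀ = r)
include hbez ha hb hd

theorem exists_coords_eq_mul_of_mem_center (hr : r ≠ 0) {g : OscillatorGroup r k l}
    (hg : g ∈ Subgroup.center (OscillatorGroup r k l)) :
    ∃ c, g.left.x = c * a ∧ g.left.y = c * b ∧ g.right.toAdd = c * d := by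
  obtain ⟨hy, hx⟩ := (mem_center_iff hr).1 hg
  have hr₀ : r₀ ≠ 0 := right_ne_zero_of_mul (hd ▸ hr)
  -- `a`, `b`, `d` are coprime, so `n a = d x` and `n b = d y` force `d ∣ n`
  have hcoprime : b * u - a * v + d * w = 1 :=
    mul_left_cancel₀ hr₀ (by linear_combination u * hb - v * ha + w * hd + hbez)
  set n := g.right.toAdd
  set c := u * g.left.y - v * g.left.x + w * n
  have hn : n = c * d := mul_left_cancel₀ hr (by
    linear_combination -(r * n) * hcoprime + u * (-n * b * hd + d * n * hb - d * hy)
      - v * (-n * a * hd + d * n * ha - d * hx))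
  refine ⟨c, mul_left_cancel₀ hr ?_, mul_left_cancel₀ hr ?_, hn⟩
  · linear_combination hx - l * hn - d * c * ha + c * a * hd
  · linear_combination hy + k * hn - d * c * hb + c * b * hd

theorem center_eq (hr : r ≠ 0) :
    Subgroup.center (OscillatorGroup r k l) =
      Subgroup.closure {inl γ, inl α ^ a * inl β ^ b * inr (Multiplicative.ofAdd 1) ^ d} := by
  set W : OscillatorGroup r k l := inl α ^ a * inl β ^ b * inr (Multiplicative.ofAdd 1) ^ d
  obtain ⟨hWx, hWy, hWn⟩ : W.left.x = a ∧ W.left.y = b ∧ W.right.toAdd = d := by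
    simp [W, ← map_zpow]
  refine le_antisymm (fun g hg => ?_) ((Subgroup.closure_le _).2 ?_)
  · obtain ⟨c, hgx, hgy, hgn⟩ := exists_coords_eq_mul_of_mem_center hbez ha hb hd hr hg
    have hg_eq : g = inl (γ ^ (g.left.z - (W ^ c).left.z)) * W ^ c := by
      ext <;> simp [-map_zpow, zpow_left_x, zpow_left_y, zpow_right_toAdd, hWx, hWy, hWn, hgx, hgy,
        hgn]
    rw [hg_eq, map_zpow]
    exact mul_mem (zpow_mem (Subgroup.subset_closure (by simp)) _)
      (zpow_mem (Subgroup.subset_closure (by simp)) _)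
  · rw [Set.insert_subset_iff, Set.singleton_subset_iff, SetLike.mem_coe, SetLike.mem_coe,
      mem_center_iff hr, mem_center_iff hr, hWx, hWy, hWn]
    refine ⟨by simp [γ], ?_, ?_⟩
    · linear_combination d * hb - b * hd
    · linear_combination d * ha - a * hd

theorem commutator_eq :
    commutator (OscillatorGroup r k l) = Subgroup.closure {inl (γ ^ r₀)} := by
  refine le_antisymm ?_ ((Subgroup.closure_le _).2 ?_)
  · rw [commutator_def, Subgroup.commutator_le]
    rintro g - h -
    rw [commutatorElement_eq, Subgroup.mem_closure_singleton]
    refine ⟨g.right.toAdd * (b * h.left.x - a * h.left.y)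
      - h.right.toAdd * (b * g.left.x - a * g.left.y)
      + d * (g.left.x * h.left.y - h.left.x * g.left.y), ?_⟩
    rw [← map_zpow, ← zpow_mul]
    congr 2
    linear_combination (g.right.toAdd * h.left.x - h.right.toAdd * g.left.x) * hb
      - (g.right.toAdd * h.left.y - h.right.toAdd * g.left.y) * ha
      + (g.left.x * h.left.y - h.left.x * g.left.y) * hd
  · have hmem (g h : OscillatorGroup r k l) : ⁅g, h⁆ ∈ commutator (OscillatorGroup r k l) :=
      Subgroup.commutator_mem_commutator (Subgroup.mem_top g) (Subgroup.mem_top h)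
    have hγk : inl γ ^ k ∈ commutator (OscillatorGroup r k l) := by
      simpa [commutatorElement_eq, -γ_zpow, α] using hmem (inr (Multiplicative.ofAdd 1)) (inl α)
    have hγl : inl γ ^ l ∈ commutator (OscillatorGroup r k l) := by
      simpa [commutatorElement_eq, -γ_zpow, β] using hmem (inr (Multiplicative.ofAdd 1)) (inl β)
    have hγr : inl γ ^ r ∈ commutator (OscillatorGroup r k l) := by
      simpa [commutatorElement_eq, -γ_zpow, α, β] using hmem (inl α) (inl β)
    rw [Set.singleton_subset_iff, SetLike.mem_coe, ← hbez, zpow_add, zpow_add, zpow_mul, zpow_mul,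
      zpow_mul]
    simp only [map_mul, map_zpow]
    exact mul_mem (mul_mem (zpow_mem hγk u) (zpow_mem hγl v)) (zpow_mem hγr w)

end

end OscillatorGroup

/-- Centre and commutator subgroup of a discrete oscillator group
`L = H₁ʳ(ℤ) ⋊_S ℤδ` with trivial induced action `S̄ = I₂`, where
`S(α) = αγᵏ`, `S(β) = βγˡ`, `S(γ) = γ`:  with `r₀ = gcd(k,l,r)`, `a = -l/r₀`,
`b = k/r₀`, `d = r/r₀`, the centre of `L` equals `⟨γ, α^a β^b δ^d⟩` and the
commutator subgroup `[L,L]` is generated by `γ^{r₀}`. -/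
theorem center_and_commutator_of_discrete_oscillator_group
    (r k l : ℤ) (hr : 0 < r)
    (φ : Multiplicative ℤ →* MulAut (Heis r))
    (hα : φ (Multiplicative.ofAdd 1) Heis.α = Heis.α * Heis.γ ^ k)
    (hβ : φ (Multiplicative.ofAdd 1) Heis.β = Heis.β * Heis.γ ^ l)
    (hγ : φ (Multiplicative.ofAdd 1) Heis.γ = Heis.γ)
    (r₀ a b d : ℤ) (hr₀ : r₀ = Int.gcd k (Int.gcd l r))
    (ha : a * r₀ = -l) (hb : b * r₀ = k) (hd : d * r₀ = r) :
    Subgroup.center (Heis r ⋊[φ] Multiplicative ℤ) =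
      Subgroup.closure {SemidirectProduct.inl Heis.γ,
        (SemidirectProduct.inl Heis.α) ^ a * (SemidirectProduct.inl Heis.β) ^ b *
          (SemidirectProduct.inr (Multiplicative.ofAdd 1)) ^ d} ∧
    commutator (Heis r ⋊[φ] Multiplicative ℤ) =
      Subgroup.closure {SemidirectProduct.inl (Heis.γ ^ r₀)} := by
  obtain rfl := eq_shearHom hα hβ hγ
  obtain ⟨u, v, w, hbez⟩ := Int.exists_mul_add_mul_add_mul_eq_gcd k l r
  rw [← hr₀] at hbez
  exact ⟨OscillatorGroup.center_eq hbez ha hb hd hr.ne',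
    OscillatorGroup.commutator_eq hbez ha hb hd⟩
end

section
/- The map φ : Osc₁ → G defined by φ(x + iy, z, t) = M(-y, x, z - xy/2)·(t) is a group isomorphism, where Osc₁ = ℂ × ℝ × ℝ with multiplication (ξ₁,z₁,t₁)·(ξ₂,z₂,t₂) = (ξ₁ + e^{it₁}ξ₂, z₁+z₂+½Im(ξ̄₁ e^{it₁}ξ₂), t₁+t₂), and G = H(1) ⋊_l ℝ. -/
/-- Multiplication of the oscillator group `Osc₁ = ℂ × ℝ × ℝ`:
`(ξ₁,z₁,t₁)·(ξ₂,z₂,t₂) = (ξ₁ + e^{it₁}ξ₂, z₁+z₂+½ Im(ξ̄₁ e^{it₁}ξ₂), t₁+t₂)`. -/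
noncomputable def oscMul (p q : ℂ × ℝ × ℝ) : ℂ × ℝ × ℝ :=
  (p.1 + Complex.exp (Complex.I * (p.2.2 : ℂ)) * q.1,
   p.2.1 + q.2.1 + (1 / 2) * ((starRingEnd ℂ) p.1 * (Complex.exp (Complex.I * (p.2.2 : ℂ)) * q.1)).im,
   p.2.2 + q.2.2)

/-- The action `l` of `ℝ` on the Heisenberg group `H(1)` (elements `M(x,y,z) ∈ ℝ³`):
`l(t)(M(x,y,z)) = M(x cos t - y sin t, x sin t + y cos t,
  z + (xy/2)(cos 2t - 1) + ((x²-y²)/4) sin 2t)`. -/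
noncomputable def lAct (t : ℝ) (m : ℝ × ℝ × ℝ) : ℝ × ℝ × ℝ :=
  (m.1 * Real.cos t - m.2.1 * Real.sin t,
   m.1 * Real.sin t + m.2.1 * Real.cos t,
   m.2.2 + m.1 * m.2.1 / 2 * (Real.cos (2 * t) - 1) + (m.1 ^ 2 - m.2.1 ^ 2) / 4 * Real.sin (2 * t))

/-- Multiplication of `G = H(1) ⋊_l ℝ`, elements written `M(x,y,z)·(t) ∈ ℝ³ × ℝ`, where
`H(1)` has product `M(x,y,z)M(x',y',z') = M(x+x', y+y', z+z'+xy')`. -/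
noncomputable def gMul (p q : (ℝ × ℝ × ℝ) × ℝ) : (ℝ × ℝ × ℝ) × ℝ :=
  ((p.1.1 + (lAct p.2 q.1).1,
    p.1.2.1 + (lAct p.2 q.1).2.1,
    p.1.2.2 + (lAct p.2 q.1).2.2 + p.1.1 * (lAct p.2 q.1).2.1),
   p.2 + q.2)

/-- The map `φ : Osc₁ → G`, `φ(x+iy, z, t) = M(-y, x, z - xy/2)·(t)`. -/
noncomputable def oscToG (p : ℂ × ℝ × ℝ) : (ℝ × ℝ × ℝ) × ℝ :=
  ((-p.1.im, p.1.re, p.2.1 - p.1.re * p.1.im / 2), p.2.2)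

/-- The map `φ(x+iy,z,t) = M(-y, x, z - xy/2)·(t)` is a group isomorphism from the
oscillator group `Osc₁` onto `G = H(1) ⋊_l ℝ`. -/
theorem oscToG_is_isomorphism :
    Function.Bijective oscToG ∧
    ∀ p q : ℂ × ℝ × ℝ, oscToG (oscMul p q) = gMul (oscToG p) (oscToG q) := by
  constructor
  · have h : Function.LeftInverse
        (fun g : (ℝ × ℝ × ℝ) × ℝ => ((⟨g.1.2.1, -g.1.1⟩ : ℂ), g.1.2.2 - g.1.1 * g.1.2.1 / 2, g.2))
        oscToG := by
      intro p
      simp [oscToG, Complex.ext_iff]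
      ring
    have h2 : Function.RightInverse
        (fun g : (ℝ × ℝ × ℝ) × ℝ => ((⟨g.1.2.1, -g.1.1⟩ : ℂ), g.1.2.2 - g.1.1 * g.1.2.1 / 2, g.2))
        oscToG := by
      intro g
      simp [oscToG]
      ring
    exact ⟨h.injective, h2.surjective⟩
  · intro p q
    have hre : (Complex.exp (Complex.I * (p.2.2 : ℂ))).re = Real.cos p.2.2 := by
      simp [Complex.exp_re]
    have him : (Complex.exp (Complex.I * (p.2.2 : ℂ))).im = Real.sin p.2.2 := by
      simp [Complex.exp_im]
    simp only [oscToG, oscMul, gMul, lAct, Prod.mk.injEq, Complex.add_im, Complex.add_re,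
      Complex.mul_re, Complex.mul_im, Complex.conj_re, Complex.conj_im, hre, him,
      Real.cos_two_mul, Real.sin_two_mul]
    refine ⟨⟨by ring, by ring, ?_⟩, trivial⟩
    have := Real.sin_sq_add_cos_sq p.2.2
    linear_combination (q.1.re * q.1.im / 2) * this
end

section
/- Let S : ℂ → ℂ be an ℝ-linear isomorphism with S(iξ) = μ·i·S(ξ) for all ξ ∈ ℂ and some μ ∈ {1,-1}. Then μ = sgn(det S), and the map F_S(ξ, z, t) = (Sξ, det(S)·z, μ·t) is an automorphism of the oscillator group Osc₁. -/
lemma FS_det_mul_lin (a : ℂ) :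
    LinearMap.det ((LinearMap.mul ℝ ℂ a)) = Complex.normSq a := by
  rw [← LinearMap.det_toMatrix Complex.basisOneI, Matrix.det_fin_two]
  simp [LinearMap.toMatrix_apply, Complex.normSq_apply]

lemma FS_det_anti (a : ℂ) :
    LinearMap.det ((LinearMap.mul ℝ ℂ a) ∘ₗ Complex.conjAe.toLinearMap) = -Complex.normSq a := by
  rw [← LinearMap.det_toMatrix Complex.basisOneI, Matrix.det_fin_two]
  simp [LinearMap.toMatrix_apply, Complex.normSq_apply]
  ring

lemma FS_decompose (S : ℂ ≃ₗ[ℝ] ℂ) (ξ : ℂ) :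
    S ξ = (ξ.re : ℂ) * S 1 + (ξ.im : ℂ) * S Complex.I := by
  have h : ξ = ξ.re • (1:ℂ) + ξ.im • Complex.I := by
    simp [Complex.real_smul, Complex.re_add_im]
  conv_lhs => rw [h]
  rw [map_add, map_smul, map_smul, Complex.real_smul, Complex.real_smul]

lemma FS_conj_eq (ξ : ℂ) : (starRingEnd ℂ) ξ = (ξ.re : ℂ) - ξ.im * Complex.I := by
  apply Complex.ext <;> simp

lemma FS_form_lin (S : ℂ ≃ₗ[ℝ] ℂ) (hS : ∀ ξ : ℂ, S (Complex.I * ξ) = Complex.I * S ξ) :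
    ∀ ξ : ℂ, S ξ = S 1 * ξ := by
  intro ξ
  rw [FS_decompose]
  have : S Complex.I = Complex.I * S 1 := by simpa using hS 1
  rw [this]
  conv_rhs => rw [← Complex.re_add_im ξ]
  ring

lemma FS_form_anti (S : ℂ ≃ₗ[ℝ] ℂ) (hS : ∀ ξ : ℂ, S (Complex.I * ξ) = -1 * (Complex.I * S ξ)) :
    ∀ ξ : ℂ, S ξ = S 1 * (starRingEnd ℂ) ξ := by
  intro ξ
  rw [FS_decompose]
  have : S Complex.I = -(Complex.I * S 1) := by
    have := hS 1; rw [mul_one] at this; rw [this]; ring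
  rw [this, FS_conj_eq]
  ring

lemma FS_ofReal_mul_im (r : ℝ) (z : ℂ) : (((r:ℂ)) * z).im = r * z.im := by
  simp [Complex.mul_im]

lemma FS_exp_neg (t : ℝ) :
    Complex.exp (Complex.I * ((-t : ℝ) : ℂ)) =
      (starRingEnd ℂ) (Complex.exp (Complex.I * (t : ℂ))) := by
  rw [← Complex.exp_conj, map_mul, Complex.conj_I, Complex.conj_ofReal]
  push_cast
  ring_nf

/-- Let `S : ℂ → ℂ` be an `ℝ`-linear isomorphism with `S(iξ) = μ·i·S(ξ)` for all `ξ` and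
some `μ ∈ {1,-1}`.  Then `μ = sgn(det S)`, and `F_S(ξ,z,t) = (Sξ, det(S)·z, μt)` is an
automorphism of the oscillator group `Osc₁` (bijective and multiplicative). -/
theorem FS_is_automorphism (S : ℂ ≃ₗ[ℝ] ℂ) (μ : ℝ) (hμ : μ = 1 ∨ μ = -1)
    (hS : ∀ ξ : ℂ, S (Complex.I * ξ) = (μ : ℂ) * (Complex.I * S ξ)) :
    μ = Real.sign (LinearMap.det (S : ℂ →ₗ[ℝ] ℂ)) ∧
    Function.Bijective
      (fun p : ℂ × ℝ × ℝ => (S p.1, LinearMap.det (S : ℂ →ₗ[ℝ] ℂ) * p.2.1, μ * p.2.2)) ∧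
    ∀ p q : ℂ × ℝ × ℝ,
      (fun p : ℂ × ℝ × ℝ => (S p.1, LinearMap.det (S : ℂ →ₗ[ℝ] ℂ) * p.2.1, μ * p.2.2)) (oscMul p q)
        = oscMul (S p.1, LinearMap.det (S : ℂ →ₗ[ℝ] ℂ) * p.2.1, μ * p.2.2)
            (S q.1, LinearMap.det (S : ℂ →ₗ[ℝ] ℂ) * q.2.1, μ * q.2.2) := by
  set a := S 1 with ha
  have ha0 : a ≠ 0 := by
    intro h
    have : (1 : ℂ) = 0 := S.injective (by simp [← ha, h])
    exact one_ne_zero this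
  have hna : 0 < Complex.normSq a := Complex.normSq_pos.mpr ha0
  have hμ0 : μ ≠ 0 := by rcases hμ with h | h <;> rw [h] <;> norm_num
  rcases hμ with h1 | h1
  · -- μ = 1 : S is ℂ-linear, S ξ = a ξ
    subst h1
    have hform : ∀ ξ : ℂ, S ξ = a * ξ := by
      apply FS_form_lin
      intro ξ; have := hS ξ; simpa using this
    have hdet : LinearMap.det (S : ℂ →ₗ[ℝ] ℂ) = Complex.normSq a := by
      rw [show (S : ℂ →ₗ[ℝ] ℂ) = LinearMap.mul ℝ ℂ a from
        LinearMap.ext fun ξ => by simpa using hform ξ]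
      exact FS_det_mul_lin a
    refine ⟨by rw [hdet, Real.sign_of_pos hna], ?_, ?_⟩
    · exact (S.toEquiv.prodCongr ((Equiv.mulLeft₀ _ (by rw [hdet]; positivity)).prodCongr
        (Equiv.mulLeft₀ 1 one_ne_zero))).bijective
    · intro p q
      obtain ⟨ξ₁, z₁, t₁⟩ := p
      obtain ⟨ξ₂, z₂, t₂⟩ := q
      simp only [oscMul, hform, hdet, Prod.mk.injEq]
      refine ⟨by push_cast; ring, ?_, by ring⟩
      have key : (starRingEnd ℂ) (a * ξ₁) *
          (Complex.exp (Complex.I * (((1:ℝ) * t₁ : ℝ) : ℂ)) * (a * ξ₂)) =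
          ((Complex.normSq a : ℝ) : ℂ) *
            ((starRingEnd ℂ) ξ₁ * (Complex.exp (Complex.I * (t₁ : ℂ)) * ξ₂)) := by
        rw [map_mul, ← Complex.mul_conj]
        push_cast
        ring
      rw [key, FS_ofReal_mul_im]
      ring
  · -- μ = -1 : S is antilinear, S ξ = a * conj ξ
    subst h1
    have hform : ∀ ξ : ℂ, S ξ = a * (starRingEnd ℂ) ξ := by
      apply FS_form_anti
      intro ξ; have := hS ξ; push_cast at this ⊢; simpa using this
    have hdet : LinearMap.det (S : ℂ →ₗ[ℝ] ℂ) = -Complex.normSq a := by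
      rw [show (S : ℂ →ₗ[ℝ] ℂ) = (LinearMap.mul ℝ ℂ a) ∘ₗ Complex.conjAe.toLinearMap from
        LinearMap.ext fun ξ => by simpa using hform ξ]
      exact FS_det_anti a
    refine ⟨by rw [hdet, Real.sign_of_neg (by linarith)], ?_, ?_⟩
    · exact (S.toEquiv.prodCongr ((Equiv.mulLeft₀ _ (by rw [hdet]; intro h; nlinarith)).prodCongr
        (Equiv.mulLeft₀ (-1) (by norm_num)))).bijective
    · intro p q
      obtain ⟨ξ₁, z₁, t₁⟩ := p
      obtain ⟨ξ₂, z₂, t₂⟩ := q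
      simp only [oscMul, hform, hdet, Prod.mk.injEq]
      have hE : Complex.exp (Complex.I * (((-1:ℝ) * t₁ : ℝ) : ℂ)) =
          (starRingEnd ℂ) (Complex.exp (Complex.I * (t₁ : ℂ))) := by
        rw [show ((-1:ℝ) * t₁) = -t₁ by ring]; exact FS_exp_neg t₁
      refine ⟨?_, ?_, by ring⟩
      · rw [hE, map_add, map_mul]; ring
      · have key : (starRingEnd ℂ) (a * (starRingEnd ℂ) ξ₁) *
            (Complex.exp (Complex.I * (((-1:ℝ) * t₁ : ℝ) : ℂ)) * (a * (starRingEnd ℂ) ξ₂)) =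
            ((Complex.normSq a : ℝ) : ℂ) *
              (starRingEnd ℂ) ((starRingEnd ℂ) ξ₁ * (Complex.exp (Complex.I * (t₁ : ℂ)) * ξ₂)) := by
          rw [hE, map_mul, map_mul, map_mul, Complex.conj_conj, ← Complex.mul_conj]
          push_cast
          ring
        rw [key, FS_ofReal_mul_im, Complex.conj_im]
        ring
end

section
/- Let T : ℂ → ℂ be the ℝ-linear map S(ξ) = i·ξ̄ (conjugation followed by multiplication by i). Then the induced automorphism F_S of the oscillator group Osc₁, defined by F_S(ξ,z,t) = (S(ξ), det(S)·z, sgn(det S)·t) = (iξ̄, -z, -t), satisfies: the pullback F_S* of the representation F_{c,d} is F_{-c,-d}, i.e., under F_S the parameters (c,d) of the generic coadjoint orbit transform to (det(S)·c, sgn(det S)·d) = (-c, -d). -/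
/-!
Send `ψ n` to `iⁿ ψ' n`. This intertwines the diagonal operators `-Zσ`, `-Tσ` with `Zτ`, `Tτ`,
and turns the ladder operators `Xσ ± i Yσ` of `F_{c,d}` into `±i (Xτ ∓ i Yτ)`: the factor `i`
per step exactly absorbs the conjugation that swaps raising and lowering. Taking the sum and the
difference of the two ladder relations separates `Xσ` and `Yσ`, which come out swapped.
-/

open Complex

section Intertwining

variable {ι R M N : Type*} [CommSemiring R] [AddCommMonoid M] [Module R M]
  [AddCommMonoid N] [Module R N]

theorem Module.Basis.map_apply_eq_of_forall_basis (b : Module.Basis ι R M) (f : M →ₗ[R] N)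
    (A : M →ₗ[R] M) (B : N →ₗ[R] N) (h : ∀ i, f (A (b i)) = B (f (b i))) (v : M) :
    f (A v) = B (f v) :=
  LinearMap.congr_fun (b.ext (f₁ := f ∘ₗ A) (f₂ := B ∘ₗ f) h) v

theorem Module.Basis.map_apply_eq_of_diagonal (b : Module.Basis ι R M) (b' : ι → N)
    (f : M →ₗ[R] N) (A : M →ₗ[R] M) (B : N →ₗ[R] N) (w α : ι → R)
    (hf : ∀ i, f (b i) = w i • b' i) (hA : ∀ i, A (b i) = α i • b i)
    (hB : ∀ i, B (b' i) = α i • b' i) (v : M) :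
    f (A v) = B (f v) :=
  b.map_apply_eq_of_forall_basis f A B (fun i => by
    rw [hA, map_smul, hf, map_smul, hB, smul_comm]) v

end Intertwining

theorem eq_and_eq_of_add_I_smul_of_sub_I_smul {W : Type*} [AddCommGroup W] [Module ℂ W]
    {a b a' b' : W} (hadd : a + I • b = b' + I • a') (hsub : a - I • b = b' - I • a') :
    a = b' ∧ b = a' := by
  have h2 : (2 : ℂ) ≠ 0 := two_ne_zero
  constructor
  · apply smul_right_injective W h2
    simp only [two_smul]
    calc a + a = (a + I • b) + (a - I • b) := by abel
      _ = b' + b' := by rw [hadd, hsub]; abel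
  · apply smul_right_injective W (mul_ne_zero h2 I_ne_zero)
    simp only [mul_smul, two_smul]
    calc I • b + I • b = (a + I • b) - (a - I • b) := by abel
      _ = I • a' + I • a' := by rw [hadd, hsub]; abel

noncomputable def Module.Basis.equivIPow {V W : Type*} [AddCommGroup V] [Module ℂ V]
    [AddCommGroup W] [Module ℂ W] (ψ : Module.Basis ℕ ℂ V) (ψ' : Module.Basis ℕ ℂ W) :
    V ≃ₗ[ℂ] W :=
  ψ.equiv (ψ'.isUnitSMul fun n => (isUnit_iff_ne_zero.mpr I_ne_zero).pow n) (Equiv.refl ℕ)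

theorem Module.Basis.equivIPow_apply {V W : Type*} [AddCommGroup V] [Module ℂ V]
    [AddCommGroup W] [Module ℂ W] (ψ : Module.Basis ℕ ℂ V) (ψ' : Module.Basis ℕ ℂ W) (n : ℕ) :
    ψ.equivIPow ψ' (ψ n) = I ^ n • ψ' n := by
  simp [Module.Basis.equivIPow, Module.Basis.isUnitSMul_apply]

theorem pullback_FS_of_F_cd_general (c d : ℝ)
    (V W : Type*) [AddCommGroup V] [Module ℂ V] [AddCommGroup W] [Module ℂ W]
    (ψ : Module.Basis ℕ ℂ V) (ψ' : Module.Basis ℕ ℂ W)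
    (Xσ Yσ Zσ Tσ : V →ₗ[ℂ] V) (Xτ Yτ Zτ Tτ : W →ₗ[ℂ] W)
    -- the derived representation of `F_{c,d}` (with `c > 0`) on `V`:
    (hZσ : ∀ n : ℕ, Zσ (ψ n) = (2 * (Real.pi : ℂ) * Complex.I * (c : ℂ)) • ψ n)
    (hTσ : ∀ n : ℕ, Tσ (ψ n) = ((2 * (Real.pi : ℂ) * (d : ℂ) - (n : ℂ)) * Complex.I) • ψ n)
    (hApσ : ∀ n : ℕ, (Xσ + Complex.I • Yσ) (ψ n)
      = ((2 * Real.sqrt (Real.pi * c * (n + 1)) : ℝ) : ℂ) • ψ (n + 1))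
    (hAmσ0 : (Xσ - Complex.I • Yσ) (ψ 0) = 0)
    (hAmσ : ∀ n : ℕ, (Xσ - Complex.I • Yσ) (ψ (n + 1))
      = ((-(2 * Real.sqrt (Real.pi * c * (n + 1))) : ℝ) : ℂ) • ψ n)
    -- the derived representation of `F_{-c,-d}` on `W`:
    (hZτ : ∀ n : ℕ, Zτ (ψ' n) = (-(2 * (Real.pi : ℂ) * Complex.I * (c : ℂ))) • ψ' n)
    (hTτ : ∀ n : ℕ, Tτ (ψ' n) = ((2 * (Real.pi : ℂ) * (-d : ℂ) + (n : ℂ)) * Complex.I) • ψ' n)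
    (hApτ : ∀ n : ℕ, (Xτ - Complex.I • Yτ) (ψ' n)
      = ((2 * Real.sqrt (Real.pi * c * (n + 1)) : ℝ) : ℂ) • ψ' (n + 1))
    (hAmτ0 : (Xτ + Complex.I • Yτ) (ψ' 0) = 0)
    (hAmτ : ∀ n : ℕ, (Xτ + Complex.I • Yτ) (ψ' (n + 1))
      = ((-(2 * Real.sqrt (Real.pi * c * (n + 1))) : ℝ) : ℂ) • ψ' n) :
    ∃ U : V ≃ₗ[ℂ] W,
      (∀ v : V, U (Yσ v) = Xτ (U v)) ∧
      (∀ v : V, U (Xσ v) = Yτ (U v)) ∧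
      (∀ v : V, U (-(Zσ v)) = Zτ (U v)) ∧
      (∀ v : V, U (-(Tσ v)) = Tτ (U v)) := by
  set U := ψ.equivIPow ψ'
  have hU : ∀ n, (U : V →ₗ[ℂ] W) (ψ n) = I ^ n • ψ' n := ψ.equivIPow_apply ψ'
  have hraise := ψ.map_apply_eq_of_forall_basis U (Xσ + I • Yσ) (I • (Xτ - I • Yτ))
    fun n => by
      simp only [LinearMap.smul_apply, hApσ, map_smul, hU, hApτ, smul_smul, pow_succ]
      ring_nf
  have hlower := ψ.map_apply_eq_of_forall_basis U (Xσ - I • Yσ) (-I • (Xτ + I • Yτ))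
    fun n => by
      cases n with
      | zero =>
        simp only [LinearMap.smul_apply, hAmσ0, map_zero, hU, pow_zero, one_smul, hAmτ0,
          smul_zero]
      | succ n =>
        simp only [LinearMap.smul_apply, hAmσ, map_smul, hU, hAmτ, smul_smul, pow_succ]
        congr 1
        push_cast
        linear_combination (-2 * √(Real.pi * c * (n + 1)) * I ^ n : ℂ) * I_mul_I
  have hXY : ∀ v, U (Xσ v) = Yτ (U v) ∧ U (Yσ v) = Xτ (U v) := fun v =>
    eq_and_eq_of_add_I_smul_of_sub_I_smul
      (by simpa [smul_sub, smul_smul, add_comm] using hraise v)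
      (by simpa [smul_add, smul_smul, sub_eq_neg_add] using hlower v)
  refine ⟨U, fun v => (hXY v).2, fun v => (hXY v).1, ?_, ?_⟩
  · exact ψ.map_apply_eq_of_diagonal ψ' U (-Zσ) Zτ _ _ hU (fun n => by simp [hZσ]) hZτ
  · refine ψ.map_apply_eq_of_diagonal ψ' U (-Tσ) Tτ _ _ hU (fun n => ?_) hTτ
    rw [LinearMap.neg_apply, hTσ, ← neg_smul]
    congr 1
    ring

/-- Pullback of the representation `F_{c,d}` of the oscillator group under the
automorphism `F_S` with `S(ξ) = i·ξ̄`.  The differential of `F_S` sends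
`X ↦ Y`, `Y ↦ X`, `Z ↦ -Z`, `T ↦ -T`, and conjugating the derived representation of
`F_{c,d}` (given on an orthonormal basis `ψ` of its Fock space by the usual formulas)
by these assignments yields a representation equivalent to `F_{-c,-d}`:
there is a linear equivalence `U` with `U∘σ(Y) = τ(X)∘U`, `U∘σ(X) = τ(Y)∘U`,
`U∘(-σ(Z)) = τ(Z)∘U`, `U∘(-σ(T)) = τ(T)∘U`, where `τ` is the derived representation
of `F_{-c,-d}` on a basis `ψ'`. -/
theorem pullback_FS_of_F_cd (c d : ℝ) (hc : 0 < c)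
    (V W : Type*) [AddCommGroup V] [Module ℂ V] [AddCommGroup W] [Module ℂ W]
    (ψ : Module.Basis ℕ ℂ V) (ψ' : Module.Basis ℕ ℂ W)
    (Xσ Yσ Zσ Tσ : V →ₗ[ℂ] V) (Xτ Yτ Zτ Tτ : W →ₗ[ℂ] W)
    -- the derived representation of `F_{c,d}` (with `c > 0`) on `V`:
    (hZσ : ∀ n : ℕ, Zσ (ψ n) = (2 * (Real.pi : ℂ) * Complex.I * (c : ℂ)) • ψ n)
    (hTσ : ∀ n : ℕ, Tσ (ψ n) = ((2 * (Real.pi : ℂ) * (d : ℂ) - (n : ℂ)) * Complex.I) • ψ n)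
    (hApσ : ∀ n : ℕ, (Xσ + Complex.I • Yσ) (ψ n)
      = ((2 * Real.sqrt (Real.pi * c * (n + 1)) : ℝ) : ℂ) • ψ (n + 1))
    (hAmσ0 : (Xσ - Complex.I • Yσ) (ψ 0) = 0)
    (hAmσ : ∀ n : ℕ, (Xσ - Complex.I • Yσ) (ψ (n + 1))
      = ((-(2 * Real.sqrt (Real.pi * c * (n + 1))) : ℝ) : ℂ) • ψ n)
    -- the derived representation of `F_{-c,-d}` on `W`:
    (hZτ : ∀ n : ℕ, Zτ (ψ' n) = (-(2 * (Real.pi : ℂ) * Complex.I * (c : ℂ))) • ψ' n)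
    (hTτ : ∀ n : ℕ, Tτ (ψ' n) = ((2 * (Real.pi : ℂ) * (-d : ℂ) + (n : ℂ)) * Complex.I) • ψ' n)
    (hApτ : ∀ n : ℕ, (Xτ - Complex.I • Yτ) (ψ' n)
      = ((2 * Real.sqrt (Real.pi * c * (n + 1)) : ℝ) : ℂ) • ψ' (n + 1))
    (hAmτ0 : (Xτ + Complex.I • Yτ) (ψ' 0) = 0)
    (hAmτ : ∀ n : ℕ, (Xτ + Complex.I • Yτ) (ψ' (n + 1))
      = ((-(2 * Real.sqrt (Real.pi * c * (n + 1))) : ℝ) : ℂ) • ψ' n) :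
    ∃ U : V ≃ₗ[ℂ] W,
      (∀ v : V, U (Yσ v) = Xτ (U v)) ∧
      (∀ v : V, U (Xσ v) = Yτ (U v)) ∧
      (∀ v : V, U (-(Zσ v)) = Zτ (U v)) ∧
      (∀ v : V, U (-(Tσ v)) = Tτ (U v)) :=
  pullback_FS_of_F_cd_general c d V W ψ ψ' Xσ Yσ Zσ Tσ Xτ Yτ Zτ Tτ hZσ hTσ hApσ hAmσ0 hAmσ hZτ hTτ
    hApτ hAmτ0 hAmτ
end
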